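/- (Monotonicity of transported mass in the shift) Let c be a real cost matrix and for λ ≥ 0 define m(λ) as the total mass of an optimal plan for AOT with cost c − λ (i.e., minimize Σ (c(i,j)−λ)γ(i,j) over Γ_≤(μ,ν)). If λ₁ ≤ λ₂ and γ₁, γ₂ are respective optimal plans, then the total mass of γ₁ is at most the total mass of γ₂ whenever both optimal plans are unique; more generally, there exist optimal plans with Σ γ₁ ≤ Σ γ₂. -/
import Mathlib


open Finset

def Feasible {n m : ℕ} (μ : Fin n → ℝ) (ν : Fin m → ℝ) (γ : Fin n → Fin m → ℝ) : Prop :=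
  (∀ i j, 0 ≤ γ i j) ∧ (∀ i, ∑ j, γ i j ≤ μ i) ∧ (∀ j, ∑ i, γ i j ≤ ν j)

def cost {n m : ℕ} (c : Fin n → Fin m → ℝ) (γ : Fin n → Fin m → ℝ) : ℝ :=
  ∑ i, ∑ j, c i j * γ i j

def Optimal {n m : ℕ} (c : Fin n → Fin m → ℝ) (μ : Fin n → ℝ) (ν : Fin m → ℝ)
    (γ : Fin n → Fin m → ℝ) : Prop :=
  Feasible μ ν γ ∧ ∀ γ2, Feasible μ ν γ2 → cost c γ ≤ cost c γ2

lemma cost_sub {n m : ℕ} (c : Fin n → Fin m → ℝ) (lam : ℝ) (γ : Fin n → Fin m → ℝ) :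
    cost (fun i j => c i j - lam) γ = cost c γ - lam * ∑ i, ∑ j, γ i j := by
  simp only [cost, sub_mul, Finset.sum_sub_distrib, Finset.mul_sum]

lemma mass_mono {n m : ℕ} (c : Fin n → Fin m → ℝ) (μ : Fin n → ℝ) (ν : Fin m → ℝ)
    (lam1 lam2 : ℝ) (hlt : lam1 < lam2) (γ1 γ2 : Fin n → Fin m → ℝ)
    (h1 : Optimal (fun i j => c i j - lam1) μ ν γ1)
    (h2 : Optimal (fun i j => c i j - lam2) μ ν γ2) :
    ∑ i, ∑ j, γ1 i j ≤ ∑ i, ∑ j, γ2 i j := by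
  have a1 := h1.2 γ2 h2.1
  have a2 := h2.2 γ1 h1.1
  rw [cost_sub, cost_sub] at a1 a2
  nlinarith

lemma exists_optimal {n m : ℕ} (c : Fin n → Fin m → ℝ) (μ : Fin n → ℝ) (ν : Fin m → ℝ)
    (hμ : ∀ i, 0 ≤ μ i) (hν : ∀ j, 0 ≤ ν j) : ∃ γ, Optimal c μ ν γ := by
  set S : Set (Fin n → Fin m → ℝ) := {γ | Feasible μ ν γ} with hSdef
  have hS0 : (fun _ _ => 0 : Fin n → Fin m → ℝ) ∈ S := by
    refine ⟨fun i j => le_refl 0, fun i => by simpa using hμ i, fun j => by simpa using hν j⟩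
  have hSclosed : IsClosed S := by
    have hEq : S =
        (⋂ i, ⋂ j, {γ : Fin n → Fin m → ℝ | 0 ≤ γ i j}) ∩
        ((⋂ i, {γ : Fin n → Fin m → ℝ | ∑ j, γ i j ≤ μ i}) ∩
         (⋂ j, {γ : Fin n → Fin m → ℝ | ∑ i, γ i j ≤ ν j})) := by
      ext γ
      simp only [hSdef, Set.mem_setOf_eq, Set.mem_inter_iff, Set.mem_iInter, Feasible]
    rw [hEq]
    refine IsClosed.inter ?_ (IsClosed.inter ?_ ?_)
    · exact isClosed_iInter fun i => isClosed_iInter fun j =>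
        isClosed_le continuous_const ((continuous_apply j).comp (continuous_apply i))
    · exact isClosed_iInter fun i => isClosed_le
        (continuous_finset_sum _ fun j _ => (continuous_apply j).comp (continuous_apply i))
        continuous_const
    · exact isClosed_iInter fun j => isClosed_le
        (continuous_finset_sum _ fun i _ => (continuous_apply j).comp (continuous_apply i))
        continuous_const
  have hSsub : S ⊆ Set.pi Set.univ (fun i => Set.pi Set.univ (fun _ : Fin m => Set.Icc 0 (μ i))) := by
    intro γ hγ i _ j _
    refine ⟨hγ.1 i j, ?_⟩
    calc γ i j ≤ ∑ j', γ i j' := Finset.single_le_sum (fun j' _ => hγ.1 i j') (Finset.mem_univ j)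
      _ ≤ μ i := hγ.2.1 i
  have hScompact : IsCompact S :=
    (isCompact_univ_pi fun i => isCompact_univ_pi fun _ => isCompact_Icc).of_isClosed_subset
      hSclosed hSsub
  have hcont : Continuous (cost c) :=
    continuous_finset_sum _ fun i _ => continuous_finset_sum _ fun j _ =>
      continuous_const.mul ((continuous_apply j).comp (continuous_apply i))
  obtain ⟨γ, hγS, hmin⟩ := hScompact.exists_isMinOn ⟨_, hS0⟩ hcont.continuousOn
  exact ⟨γ, hγS, fun γ2 hγ2 => hmin hγ2⟩

theorem stmt_12 {n m : ℕ} (c : Fin n → Fin m → ℝ) (μ : Fin n → ℝ) (ν : Fin m → ℝ)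
    (hμ : ∀ i, 0 ≤ μ i) (hν : ∀ j, 0 ≤ ν j)
    (lam1 lam2 : ℝ) (hlam : lam1 ≤ lam2) :
    (∀ γ1 γ2, Optimal (fun i j => c i j - lam1) μ ν γ1 →
        Optimal (fun i j => c i j - lam2) μ ν γ2 →
        (∀ γ, Optimal (fun i j => c i j - lam1) μ ν γ → γ = γ1) →
        (∀ γ, Optimal (fun i j => c i j - lam2) μ ν γ → γ = γ2) →
        ∑ i, ∑ j, γ1 i j ≤ ∑ i, ∑ j, γ2 i j) ∧
    (∃ γ1 γ2, Optimal (fun i j => c i j - lam1) μ ν γ1 ∧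
        Optimal (fun i j => c i j - lam2) μ ν γ2 ∧
        ∑ i, ∑ j, γ1 i j ≤ ∑ i, ∑ j, γ2 i j) := by
  constructor
  · intro γ1 γ2 h1 h2 hu1 hu2
    rcases lt_or_eq_of_le hlam with hlt | heq
    · exact mass_mono c μ ν lam1 lam2 hlt γ1 γ2 h1 h2
    · subst heq
      rw [hu1 γ2 h2]
  · obtain ⟨γ1, h1⟩ := exists_optimal (fun i j => c i j - lam1) μ ν hμ hν
    rcases lt_or_eq_of_le hlam with hlt | heq
    · obtain ⟨γ2, h2⟩ := exists_optimal (fun i j => c i j - lam2) μ ν hμ hν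
      exact ⟨γ1, γ2, h1, h2, mass_mono c μ ν lam1 lam2 hlt γ1 γ2 h1 h2⟩
    · subst heq
      exact ⟨γ1, γ1, h1, h1, le_refl _⟩
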